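/- arXiv:1712.08051 — 5 statements merged into one kernel-verified Lean document; each statement's English description precedes it below -/
import Mathlib

section
/- The function f₀(x) = ln Γ(x+1) − ln √(2π) − (x + 1/2) ln x + x − (x/2) ln(x sinh(1/x)) − 7/(324 x³(35x² + 33)) tends to 0 as x → ∞. -/
noncomputable def f₀ (x : ℝ) : ℝ :=
  Real.log (Real.Gamma (x + 1)) - Real.log (Real.sqrt (2 * Real.pi))
    - (x + 1 / 2) * Real.log x + x - x / 2 * Real.log (x * Real.sinh (1 / x))
    - 7 / (324 * x ^ 3 * (35 * x ^ 2 + 33))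

/-!
Since `log ∘ Γ` is convex and `log Γ(y + 1) = log Γ(y) + log y`, on `[n, n + 1]` the function
`log Γ(x + 1)` lies between the lines through `(n, log n!)` of slopes `log n` and `log (n + 1)`.
Hence `log Γ(x + 1) - (x + 1/2) log x + x` differs from its value at `⌊x⌋` by `O(1/⌊x⌋)`, and
Stirling's formula for `n!` gives its limit `log √(2π)`. The other two terms of `f₀` are
`O(1/x)`, because `1 ≤ x sinh(1/x) ≤ 1 + 1/x²`.
-/

open Real Filter Topology
open scoped Nat

noncomputable def logStirlingRatio (x : ℝ) : ℝ :=
  log (Gamma (x + 1)) - (x + 1 / 2) * log x + x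

lemma logStirlingRatio_natCast_eq {n : ℕ} (hn : n ≠ 0) :
    logStirlingRatio n = log (Stirling.stirlingSeq n) + log 2 / 2 := by
  have hn0 : (0 : ℝ) < n := by positivity
  rw [logStirlingRatio, Stirling.log_stirlingSeq_formula, Gamma_nat_eq_factorial,
    log_mul two_ne_zero hn0.ne', log_div hn0.ne' (exp_ne_zero 1), log_exp]
  ring

lemma tendsto_logStirlingRatio_natCast :
    Tendsto (fun n : ℕ ↦ logStirlingRatio n) atTop (𝓝 (log √(2 * π))) := by
  have hlim : log √(2 * π) = log √π + log 2 / 2 := by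
    rw [log_sqrt pi_pos.le, log_sqrt (by positivity), log_mul two_ne_zero pi_pos.ne']
    ring
  rw [hlim]
  refine ((Stirling.tendsto_stirlingSeq_sqrt_pi.log (by positivity)).add_const _).congr' ?_
  filter_upwards [eventually_ne_atTop 0] with n hn
  exact (logStirlingRatio_natCast_eq hn).symm

lemma log_comp_Gamma_add_one {y : ℝ} (hy : 0 < y) :
    (log ∘ Gamma) (y + 1) = (log ∘ Gamma) y + log y := by
  rw [Function.comp_apply, Gamma_add_one hy.ne', log_mul hy.ne' (Gamma_pos_of_pos hy).ne',
    add_comm, Function.comp_apply]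

lemma log_factorial_add_mul_log_le_log_Gamma {n : ℕ} (hn : n ≠ 0) {t : ℝ} (ht : 0 ≤ t) :
    log (n ! : ℝ) + t * log n ≤ log (Gamma (n + t + 1)) := by
  rcases ht.eq_or_lt with rfl | ht
  · simp [Gamma_nat_eq_factorial]
  have h := BohrMollerup.f_add_nat_ge convexOn_log_Gamma log_comp_Gamma_add_one
    (n := n + 1) (by omega) ht
  simp only [Function.comp_apply, Nat.cast_add, Nat.cast_one, add_sub_cancel_right,
    Gamma_nat_eq_factorial] at h
  rwa [add_right_comm]

lemma log_Gamma_le_log_factorial_add_mul_log {n : ℕ} {t : ℝ} (ht0 : 0 ≤ t) (ht1 : t ≤ 1) :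
    log (Gamma (n + t + 1)) ≤ log (n ! : ℝ) + t * log (n + 1) := by
  rcases ht0.eq_or_lt with rfl | ht0
  · simp [Gamma_nat_eq_factorial]
  have h := BohrMollerup.f_add_nat_le convexOn_log_Gamma log_comp_Gamma_add_one
    (n := n + 1) (by omega) ht0 ht1
  simp only [Function.comp_apply, Nat.cast_add, Nat.cast_one, Gamma_nat_eq_factorial] at h
  rwa [add_right_comm]

lemma log_Gamma_nat_add_sub_mem {n : ℕ} (hn : n ≠ 0) {t : ℝ} (ht0 : 0 ≤ t) (ht1 : t ≤ 1) :
    log (Gamma (n + t + 1)) - log (n ! : ℝ) - t * log n ∈ Set.Icc 0 (1 / (n : ℝ)) := by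
  have hn0 : (0 : ℝ) < n := by positivity
  have hlower := log_factorial_add_mul_log_le_log_Gamma hn ht0
  have hupper := log_Gamma_le_log_factorial_add_mul_log (n := n) ht0 ht1
  have hlog : t * (log (n + 1) - log n) ≤ 1 / n := by
    have := log_le_sub_one_of_pos (by positivity : (0 : ℝ) < (n + 1) / n)
    rw [log_div (by positivity) hn0.ne', add_div, div_self hn0.ne', add_sub_cancel_left] at this
    nlinarith [one_div_pos.2 hn0]
  rw [Set.mem_Icc]
  constructor <;> linarith

lemma mul_log_one_add_div_sub_mem {N t : ℝ} (hN : 0 < N) (ht0 : 0 ≤ t) (ht1 : t ≤ 1) :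
    (N + t + 1 / 2) * log (1 + t / N) - t ∈ Set.Icc 0 (3 / (2 * N)) := by
  have hs : 0 < 1 + t / N := by positivity
  have hlower : t / (N + t) ≤ log (1 + t / N) := by
    have := one_sub_inv_le_log_of_pos hs
    rwa [show 1 - (1 + t / N)⁻¹ = t / (N + t) by field_simp; ring] at this
  have hupper : log (1 + t / N) ≤ t / N := by linarith [log_le_sub_one_of_pos hs]
  rw [Set.mem_Icc]
  constructor
  · rw [sub_nonneg]
    calc t = (N + t + 1 / 2) * (t / (N + t)) - t / (2 * (N + t)) := by field_simp; ring
      _ ≤ (N + t + 1 / 2) * log (1 + t / N) := by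
        have : 0 ≤ t / (2 * (N + t)) := by positivity
        nlinarith
  · calc (N + t + 1 / 2) * log (1 + t / N) - t ≤ (N + t + 1 / 2) * (t / N) - t := by
          nlinarith
      _ = t * (t + 1 / 2) / N := by field_simp; ring
      _ ≤ 3 / (2 * N) := by
        have : t * (t + 1 / 2) ≤ 3 / 2 := by nlinarith
        rw [div_le_div_iff₀ hN (by positivity)]
        nlinarith

lemma abs_logStirlingRatio_add_sub_le {n : ℕ} (hn : n ≠ 0) {t : ℝ} (ht0 : 0 ≤ t) (ht1 : t ≤ 1) :
    |logStirlingRatio (n + t) - logStirlingRatio n| ≤ 2 / n := by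
  have hn0 : (0 : ℝ) < n := by positivity
  have hlog : log (n + t) = log n + log (1 + t / n) := by
    rw [← log_mul hn0.ne' (by positivity)]
    congr 1
    field_simp
  have hdiff : logStirlingRatio (n + t) - logStirlingRatio n =
      (log (Gamma (n + t + 1)) - log (n ! : ℝ) - t * log n) -
        ((n + t + 1 / 2) * log (1 + t / n) - t) := by
    rw [logStirlingRatio, logStirlingRatio, hlog, Gamma_nat_eq_factorial]
    ring
  obtain ⟨ha0, ha1⟩ := log_Gamma_nat_add_sub_mem hn ht0 ht1
  obtain ⟨hb0, hb1⟩ := mul_log_one_add_div_sub_mem hn0 ht0 ht1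
  have h1 : 1 / (n : ℝ) ≤ 2 / n := by gcongr; norm_num
  have h2 : 3 / (2 * n : ℝ) ≤ 2 / n := by rw [div_le_div_iff₀ (by positivity) hn0]; nlinarith
  rw [hdiff, abs_le]
  constructor <;> linarith

lemma tendsto_of_abs_sub_comp_floor_le {g : ℝ → ℝ} {u ε : ℕ → ℝ} {L : ℝ}
    (hu : Tendsto u atTop (𝓝 L)) (hε : Tendsto ε atTop (𝓝 0))
    (h : ∀ᶠ x in atTop, |g x - u ⌊x⌋₊| ≤ ε ⌊x⌋₊) : Tendsto g atTop (𝓝 L) := by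
  have hd : Tendsto (fun x ↦ g x - u ⌊x⌋₊) atTop (𝓝 0) :=
    squeeze_zero_norm' h (hε.comp tendsto_nat_floor_atTop)
  simpa using hd.add (hu.comp tendsto_nat_floor_atTop)

theorem tendsto_logStirlingRatio :
    Tendsto logStirlingRatio atTop (𝓝 (log √(2 * π))) := by
  refine tendsto_of_abs_sub_comp_floor_le tendsto_logStirlingRatio_natCast
    (tendsto_const_div_atTop_nhds_zero_nat 2) ?_
  filter_upwards [eventually_ge_atTop 1] with x hx
  have hn : ⌊x⌋₊ ≠ 0 := (Nat.floor_pos.2 hx).ne'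
  have hfloor := Nat.floor_le (zero_le_one.trans hx)
  have hx' := abs_logStirlingRatio_add_sub_le hn (sub_nonneg.2 hfloor)
    (by linarith [Nat.lt_floor_add_one x])
  rwa [add_sub_cancel] at hx'

lemma sinh_le_self_add_pow_three {u : ℝ} (hu0 : 0 ≤ u) (hu1 : u ≤ 1) : sinh u ≤ u + u ^ 3 := by
  have hexp := exp_bound (x := u) (by rwa [abs_of_nonneg hu0]) (n := 3) (by norm_num)
  have hexp_neg := exp_bound (x := -u) (by rwa [abs_neg, abs_of_nonneg hu0]) (n := 3)
    (by norm_num)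
  simp only [Finset.sum_range_succ, Finset.sum_range_zero, abs_neg, abs_of_nonneg hu0]
    at hexp hexp_neg
  norm_num at hexp hexp_neg
  rw [abs_le] at hexp hexp_neg
  rw [sinh_eq]
  nlinarith [hexp.1, hexp.2, hexp_neg.1, hexp_neg.2]

lemma log_mul_sinh_inv_mem {x : ℝ} (hx : 1 ≤ x) :
    log (x * sinh (1 / x)) ∈ Set.Icc 0 (1 / x ^ 2) := by
  have hx0 : 0 < x := by linarith
  have hu0 : 0 < 1 / x := by positivity
  have hsinh_lower : 1 / x < sinh (1 / x) := self_lt_sinh_iff.2 hu0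
  have hsinh_upper := sinh_le_self_add_pow_three hu0.le ((div_le_one hx0).2 hx)
  have hlower : 1 ≤ x * sinh (1 / x) := by
    calc (1 : ℝ) = x * (1 / x) := by field_simp
      _ ≤ x * sinh (1 / x) := by gcongr
  have hupper : x * sinh (1 / x) ≤ 1 + 1 / x ^ 2 := by
    calc x * sinh (1 / x) ≤ x * (1 / x + (1 / x) ^ 3) := by gcongr
      _ = 1 + 1 / x ^ 2 := by field_simp
  refine ⟨log_nonneg hlower, ?_⟩
  calc log (x * sinh (1 / x)) ≤ log (1 + 1 / x ^ 2) := log_le_log (by linarith) hupper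
    _ ≤ 1 / x ^ 2 := by linarith [log_le_sub_one_of_pos (by positivity : (0 : ℝ) < 1 + 1 / x ^ 2)]

lemma tendsto_mul_log_mul_sinh_inv :
    Tendsto (fun x : ℝ ↦ x / 2 * log (x * sinh (1 / x))) atTop (𝓝 0) := by
  have hbound : Tendsto (fun x : ℝ ↦ 1 / (2 * x)) atTop (𝓝 0) :=
    tendsto_const_nhds.div_atTop (tendsto_id.const_mul_atTop two_pos)
  refine squeeze_zero' ?_ ?_ hbound <;> filter_upwards [eventually_ge_atTop 1] with x hx <;>
    obtain ⟨hlog0, hlog1⟩ := log_mul_sinh_inv_mem hx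
  · positivity
  · calc x / 2 * log (x * sinh (1 / x)) ≤ x / 2 * (1 / x ^ 2) := by gcongr
      _ = 1 / (2 * x) := by field_simp

lemma tendsto_seven_div_mul_pow_three_mul :
    Tendsto (fun x : ℝ ↦ 7 / (324 * x ^ 3 * (35 * x ^ 2 + 33))) atTop (𝓝 0) := by
  refine tendsto_const_nhds.div_atTop (Tendsto.atTop_mul_atTop₀ ?_ ?_)
  · exact (tendsto_pow_atTop (by norm_num)).const_mul_atTop (by norm_num)
  · exact tendsto_atTop_add_const_right _ _
      ((tendsto_pow_atTop (by norm_num)).const_mul_atTop (by norm_num))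

theorem f₀_tendsto_zero : Filter.Tendsto f₀ Filter.atTop (nhds 0) := by
  have h := ((tendsto_logStirlingRatio.sub_const (log √(2 * π))).sub
    tendsto_mul_log_mul_sinh_inv).sub tendsto_seven_div_mul_pow_three_mul
  rw [sub_self, sub_zero, sub_zero] at h
  refine h.congr fun x ↦ ?_
  rw [f₀, logStirlingRatio]
  ring
end

section
/- The derivative f₀′ of the function f₀(x) = ln Γ(x+1) − ln √(2π) − (x + 1/2) ln x + x − (x/2) ln(x sinh(1/x)) − 7/(324 x³(35x² + 33)) tends to 0 as x → ∞; explicitly, ψ(x+1) − (1/2) ln(x sinh(1/x)) + (1/(2x)) coth(1/x) − ln x − 1/(2x) − 1/2 + (7/324)(175x² + 99)/(x⁴(35x² + 33)²) → 0 as x → ∞. -/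
/-!
Convexity of `log ∘ Γ` (Bohr–Mollerup) squeezes its derivative `ψ(x + 1)` between the slopes
`log x` and `log (x + 1)` of the functional equation `log Γ(y + 1) = log Γ(y) + log y`, so
`ψ(x + 1) - log x → 0`. Since `sinh' 0 = 1`, `x sinh (1/x) → 1`; hence the logarithmic term
vanishes in the limit and `coth (1/x) / (2x) → 1/2` cancels the constant `-1/2`. The remaining
terms are rational functions of `x` vanishing at infinity.
-/

/-- The digamma function `ψ = Γ'/Γ`. -/
noncomputable def digamma (x : ℝ) : ℝ := deriv Real.Gamma x / Real.Gamma x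

open Filter Topology Real

lemma hasDerivAt_log_Gamma {y : ℝ} (hy : 0 < y) : HasDerivAt (log ∘ Gamma) (digamma y) y :=
  (differentiableAt_Gamma fun m => ((neg_nonpos.mpr m.cast_nonneg).trans_lt hy).ne').hasDerivAt.log
    (Gamma_pos_of_pos hy).ne'

lemma slope_log_Gamma_add_one {y : ℝ} (hy : 0 < y) : slope (log ∘ Gamma) y (y + 1) = log y := by
  rw [slope_def_field, add_sub_cancel_left, div_one, Function.comp_apply, Function.comp_apply,
    Gamma_add_one hy.ne', log_mul hy.ne' (Gamma_pos_of_pos hy).ne', add_sub_cancel_right]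

lemma log_le_digamma_add_one {x : ℝ} (hx : 0 < x) : log x ≤ digamma (x + 1) :=
  slope_log_Gamma_add_one hx ▸ convexOn_log_Gamma.slope_le_of_hasDerivAt hx
    (by positivity : (0 : ℝ) < x + 1) (lt_add_one x) (hasDerivAt_log_Gamma (by positivity))

lemma digamma_le_log {y : ℝ} (hy : 0 < y) : digamma y ≤ log y :=
  slope_log_Gamma_add_one hy ▸ convexOn_log_Gamma.le_slope_of_hasDerivAt hy
    (by positivity : (0 : ℝ) < y + 1) (lt_add_one y) (hasDerivAt_log_Gamma hy)

lemma tendsto_digamma_add_one_sub_log :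
    Tendsto (fun x => digamma (x + 1) - log x) atTop (𝓝 0) := by
  refine tendsto_of_tendsto_of_tendsto_of_le_of_le' tendsto_const_nhds
    (tendsto_log_comp_add_sub_log 1) ?_ ?_ <;>
  filter_upwards [eventually_gt_atTop 0] with x hx
  · linarith [log_le_digamma_add_one hx]
  · linarith [digamma_le_log (by positivity : 0 < x + 1)]

lemma HasDerivAt.tendsto_mul_inv_atTop {f : ℝ → ℝ} {f' : ℝ} (hf : HasDerivAt f f' 0)
    (h0 : f 0 = 0) : Tendsto (fun x => x * f x⁻¹) atTop (𝓝 f') := by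
  simpa [h0, Function.comp_def] using
    hf.tendsto_slope_zero_right.comp tendsto_inv_atTop_nhdsGT_zero

open Polynomial in
lemma tendsto_correction_deriv_atTop :
    Tendsto (fun x : ℝ => (175 * x ^ 2 + 99) / (x ^ 4 * (35 * x ^ 2 + 33) ^ 2)) atTop (𝓝 0) := by
  have hdeg : (C 175 * X ^ 2 + C 99 : ℝ[X]).degree <
      (X ^ 4 * (C 35 * X ^ 2 + C 33) ^ 2 : ℝ[X]).degree := by
    rw [show (C 175 * X ^ 2 + C 99 : ℝ[X]).degree = 2 by compute_degree!,
      show (X ^ 4 * (C 35 * X ^ 2 + C 33) ^ 2 : ℝ[X]).degree = 8 by compute_degree!]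
    decide
  simpa using div_tendsto_atTop_zero_of_degree_lt
    (C 175 * X ^ 2 + C 99) (X ^ 4 * (C 35 * X ^ 2 + C 33) ^ 2) hdeg

theorem f₀_deriv_tendsto_zero :
    Filter.Tendsto
      (fun x : ℝ =>
        digamma (x + 1) - 1 / 2 * Real.log (x * Real.sinh (1 / x))
          + 1 / (2 * x) * (Real.cosh (1 / x) / Real.sinh (1 / x))
          - Real.log x - 1 / (2 * x) - 1 / 2
          + 7 / 324 * ((175 * x ^ 2 + 99) / (x ^ 4 * (35 * x ^ 2 + 33) ^ 2)))
      Filter.atTop (nhds 0) := by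
  have hsinh : Tendsto (fun x => x * sinh x⁻¹) atTop (𝓝 1) := by
    simpa using (hasDerivAt_sinh 0).tendsto_mul_inv_atTop sinh_zero
  have hcosh : Tendsto (fun x => cosh x⁻¹) atTop (𝓝 1) := by
    simpa [Function.comp_def] using (continuous_cosh.tendsto 0).comp tendsto_inv_atTop_zero
  have hlog : Tendsto (fun x => log (x * sinh x⁻¹)) atTop (𝓝 0) := by
    simpa [Function.comp_def] using (continuousAt_log one_ne_zero).tendsto.comp hsinh
  have hcoth : Tendsto (fun x => cosh x⁻¹ / (2 * (x * sinh x⁻¹))) atTop (𝓝 2⁻¹) := by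
    simpa [Pi.div_def] using hcosh.div (hsinh.const_mul 2) (by norm_num)
  have hsum := (((tendsto_digamma_add_one_sub_log.sub (hlog.const_mul 2⁻¹)).add
    (hcoth.sub_const 2⁻¹)).sub (tendsto_inv_atTop_zero.const_mul 2⁻¹)).add
    (tendsto_correction_deriv_atTop.const_mul (7 / 324))
  convert hsum using 2 with x
  · simp only [one_div]
    ring
  · norm_num
end

section
/- For every real number x > 0, the trigamma function satisfies ψ′(x + 1/2) > x (x⁴ + (227/66) x² + 4237/2640) / (x⁶ + (155/44) x⁴ + (329/176) x² + 375/4928). -/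
noncomputable def trigD (y : ℝ) : ℝ :=
  y ^ 6 + 155 / 44 * y ^ 4 + 329 / 176 * y ^ 2 + 375 / 4928

noncomputable def trigF (y : ℝ) : ℝ :=
  y * (y ^ 4 + 227 / 66 * y ^ 2 + 4237 / 2640) / trigD y

lemma trigD_pos (y : ℝ) : 0 < trigD y := by
  unfold trigD; positivity

lemma trigF_key {y : ℝ} (hy : 0 < y) :
    trigF y - trigF (y + 1) < 1 / (y + 1 / 2) ^ 2 := by
  have hD1 := trigD_pos y
  have hD2 := trigD_pos (y + 1)
  have hq : (0 : ℝ) < (y + 1 / 2) ^ 2 := by positivity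
  have hkey : 1 / (y + 1 / 2) ^ 2 - (trigF y - trigF (y + 1)) =
      (3600 / 5929) / ((y + 1 / 2) ^ 2 * trigD y * trigD (y + 1)) := by
    unfold trigF trigD
    unfold trigD at hD1 hD2
    field_simp
    ring
  have hpos : (0 : ℝ) < (3600 / 5929) / ((y + 1 / 2) ^ 2 * trigD y * trigD (y + 1)) := by
    apply div_pos (by norm_num)
    positivity
  linarith

lemma trigF_nonneg {y : ℝ} (hy : 0 < y) : 0 ≤ trigF y := by
  unfold trigF trigD; positivity

lemma trigF_le {y : ℝ} (hy : 0 < y) : trigF y ≤ 7 / y := by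
  have hD := trigD_pos y
  unfold trigF
  rw [div_le_div_iff₀ hD hy]
  unfold trigD
  nlinarith [pow_pos hy 6, pow_pos hy 4, pow_pos hy 2, pow_pos hy 1]

set_option maxHeartbeats 1000000 in
theorem trigamma_lower_bound (x : ℝ) (hx : 0 < x) :
    (∑' n : ℕ, 1 / (x + 1 / 2 + (n : ℝ)) ^ 2) >
      x * (x ^ 4 + 227 / 66 * x ^ 2 + 4237 / 2640) /
        (x ^ 6 + 155 / 44 * x ^ 4 + 329 / 176 * x ^ 2 + 375 / 4928) := by
  set h : ℕ → ℝ := fun n => 1 / (x + 1 / 2 + (n : ℝ)) ^ 2 with hh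
  -- summability
  have hsum : Summable h := by
    have h2 : Summable (fun n : ℕ => 1 / ((n : ℝ) + 1) ^ 2) := by
      have := (summable_nat_add_iff (f := fun n : ℕ => 1 / (n : ℝ) ^ 2) 1).mpr
        (Real.summable_one_div_nat_pow.mpr one_lt_two)
      simpa using this
    apply Summable.of_nonneg_of_le (f := fun n : ℕ => 4 * (1 / ((n : ℝ) + 1) ^ 2))
      ?_ ?_ (h2.mul_left 4)
    · intro n; positivity
    · intro n
      have hn : (0 : ℝ) ≤ (n : ℝ) := Nat.cast_nonneg n
      simp only [mul_one_div]
      rw [div_le_div_iff₀ (by positivity) (by positivity)]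
      nlinarith
  -- each shifted term positivity for y values
  have hxy : ∀ n : ℕ, (0 : ℝ) < x + 1 + (n : ℝ) := by
    intro n; have := Nat.cast_nonneg (α := ℝ) n; linarith
  -- tail bound: trigF (x+1) ≤ ∑' n, h (n+1)
  have hsum' : Summable (fun n : ℕ => h (n + 1)) :=
    (summable_nat_add_iff 1).mpr hsum
  have htail : trigF (x + 1) ≤ ∑' n : ℕ, h (n + 1) := by
    have hTend1 : Filter.Tendsto (fun N : ℕ => ∑ i ∈ Finset.range N, h (i + 1))
        Filter.atTop (nhds (∑' n : ℕ, h (n + 1))) := hsum'.hasSum.tendsto_sum_nat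
    have hTend0 : Filter.Tendsto (fun N : ℕ => trigF (x + 1 + (N : ℝ)))
        Filter.atTop (nhds 0) := by
      have hb : Filter.Tendsto (fun N : ℕ => 7 / (x + 1 + (N : ℝ)))
          Filter.atTop (nhds 0) := by
        have ha : Filter.Tendsto (fun N : ℕ => x + 1 + (N : ℝ)) Filter.atTop Filter.atTop :=
          Filter.tendsto_atTop_add_const_left _ _ tendsto_natCast_atTop_atTop
        simpa [div_eq_mul_inv] using ha.inv_tendsto_atTop.const_mul (7 : ℝ)
      exact squeeze_zero (fun N => trigF_nonneg (hxy N)) (fun N => trigF_le (hxy N)) hb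
    have hTend2 : Filter.Tendsto (fun N : ℕ => trigF (x + 1) - trigF (x + 1 + (N : ℝ)))
        Filter.atTop (nhds (trigF (x + 1))) := by
      simpa using tendsto_const_nhds.sub hTend0
    refine le_of_tendsto_of_tendsto' hTend2 hTend1 fun N => ?_
    have hts : ∑ i ∈ Finset.range N, (trigF (x + 1 + (i : ℝ)) - trigF (x + 1 + ((i : ℝ) + 1)))
        = trigF (x + 1 + (0 : ℕ)) - trigF (x + 1 + (N : ℝ)) := by
      have := Finset.sum_range_sub' (fun i : ℕ => trigF (x + 1 + (i : ℝ))) N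
      simpa [Nat.cast_add, Nat.cast_one] using this
    have hle : ∀ i ∈ Finset.range N,
        trigF (x + 1 + (i : ℝ)) - trigF (x + 1 + ((i : ℝ) + 1)) ≤ h (i + 1) := by
      intro i _
      have := (trigF_key (hxy i)).le
      have harg : x + 1 + (i : ℝ) + 1 / 2 = x + 1 / 2 + ((i : ℝ) + 1) := by ring
      have harg2 : x + 1 + (i : ℝ) + 1 = x + 1 + ((i : ℝ) + 1) := by ring
      rw [harg, harg2] at this
      simpa [hh, Nat.cast_add, Nat.cast_one] using this
    calc trigF (x + 1) - trigF (x + 1 + (N : ℝ))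
        = ∑ i ∈ Finset.range N, (trigF (x + 1 + (i : ℝ)) - trigF (x + 1 + ((i : ℝ) + 1))) := by
          rw [hts]; norm_num
      _ ≤ ∑ i ∈ Finset.range N, h (i + 1) := Finset.sum_le_sum hle
  have hsplit : (∑' n : ℕ, h n) = h 0 + ∑' n : ℕ, h (n + 1) := Summable.tsum_eq_zero_add hsum
  have h0 : trigF x - trigF (x + 1) < h 0 := by
    have := trigF_key hx
    simpa [hh] using this
  have hgoal : trigF x < ∑' n : ℕ, h n := by
    rw [hsplit]; linarith
  have hrhs : x * (x ^ 4 + 227 / 66 * x ^ 2 + 4237 / 2640) /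
        (x ^ 6 + 155 / 44 * x ^ 4 + 329 / 176 * x ^ 2 + 375 / 4928) = trigF x := rfl
  rw [hrhs]
  exact hgoal
end

section
/- Let n ∈ ℕ and m ∈ ℕ ∪ {0} with n > m, and let Pₙ(t) = Σ_{i=m+1}^{n} aᵢ tⁱ − Σ_{i=0}^{m} aᵢ tⁱ, where aₙ > 0, aₘ > 0, and aᵢ ≥ 0 for all 0 ≤ i ≤ n−1 with i ≠ m. Then there exists a unique number t* ∈ (0, ∞) satisfying Pₙ(t*) = 0, and moreover Pₙ(t) < 0 for all t ∈ (0, t*) and Pₙ(t) > 0 for all t ∈ (t*, ∞). -/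
/-!
Dividing by `t ^ m`, `Pₙ t = t ^ m * g t` on `(0, ∞)` with
`g t = ∑_{i > m} aᵢ t ^ (i - m) - ∑_{i ≤ m} aᵢ (t⁻¹) ^ (m - i)`.
With nonnegative coefficients the first sum increases with `t` (strictly, as `aₙ > 0`) and the
second decreases, so `g` is strictly increasing. Near `0` the first sum is small while the second
is at least `aₘ > 0`; for large `t` the first sum is unbounded while the second stays bounded.
So the continuous `g` has exactly one positive zero `t*`, and `Pₙ` has the sign of `g`.
-/

open Finset Filter Topology

section PosCoeffSums

variable {ι : Type*} (s : Finset ι) {c : ι → ℝ} (e : ι → ℕ)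

theorem monotoneOn_sum_mul_pow (hc : ∀ i ∈ s, 0 ≤ c i) :
    MonotoneOn (fun t : ℝ => ∑ i ∈ s, c i * t ^ e i) (Set.Ici 0) :=
  fun _ hx _ _ hxy => sum_le_sum fun i hi =>
    mul_le_mul_of_nonneg_left (pow_le_pow_left₀ hx hxy _) (hc i hi)

theorem strictMonoOn_sum_mul_pow (hc : ∀ i ∈ s, 0 ≤ c i) {j : ι} (hj : j ∈ s) (hcj : 0 < c j)
    (hej : e j ≠ 0) :
    StrictMonoOn (fun t : ℝ => ∑ i ∈ s, c i * t ^ e i) (Set.Ici 0) :=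
  fun _ hx _ _ hxy => sum_lt_sum
    (fun i hi => mul_le_mul_of_nonneg_left (pow_le_pow_left₀ hx hxy.le _) (hc i hi))
    ⟨j, hj, mul_lt_mul_of_pos_left (pow_lt_pow_left₀ hxy hx hej) hcj⟩

end PosCoeffSums

theorem exists_pos_root_of_strictMonoOn {f g w : ℝ → ℝ} (hw : ∀ t, 0 < t → 0 < w t)
    (hf : ∀ t, 0 < t → f t = w t * g t) (hcont : ContinuousOn g (Set.Ioi 0))
    (hmono : StrictMonoOn g (Set.Ioi 0)) {x y : ℝ} (hx : 0 < x) (hgx : g x < 0) (hy : 0 < y)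
    (hgy : 0 < g y) :
    ∃ t' : ℝ, 0 < t' ∧ f t' = 0 ∧
      (∀ s : ℝ, 0 < s → f s = 0 → s = t') ∧
      (∀ t : ℝ, 0 < t → t < t' → f t < 0) ∧
      (∀ t : ℝ, t' < t → 0 < f t) := by
  have hxy : x ≤ y := ((hmono.lt_iff_lt hx hy).mp (hgx.trans hgy)).le
  obtain ⟨t', ⟨hxt', -⟩, hgt'⟩ := intermediate_value_Icc hxy
    (hcont.mono fun t ht => hx.trans_le ht.1) ⟨hgx.le, hgy.le⟩
  have ht' : 0 < t' := hx.trans_le hxt'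
  refine ⟨t', ht', by rw [hf t' ht', hgt', mul_zero], fun s hs hfs => ?_, fun t ht htt' => ?_,
    fun t htt' => ?_⟩
  · have hgs : g s = g t' := by
      rw [hgt']
      simpa [hf s hs, (hw s hs).ne'] using hfs
    exact hmono.injOn hs ht' hgs
  · rw [hf t ht]
    exact mul_neg_of_pos_of_neg (hw t ht) (hgt' ▸ hmono ht ht' htt')
  · have ht : 0 < t := ht'.trans htt'
    rw [hf t ht]
    exact mul_pos (hw t ht) (hgt' ▸ hmono ht' ht htt')

section Reduced

variable (a : ℕ → ℝ) (m n : ℕ)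

noncomputable def reducedPoly (t : ℝ) : ℝ :=
  ∑ i ∈ Icc (m + 1) n, a i * t ^ (i - m) - ∑ i ∈ Icc 0 m, a i * t⁻¹ ^ (m - i)

theorem pow_mul_reducedPoly {t : ℝ} (ht : t ≠ 0) :
    t ^ m * reducedPoly a m n t =
      ∑ i ∈ Icc (m + 1) n, a i * t ^ i - ∑ i ∈ Icc 0 m, a i * t ^ i := by
  rw [reducedPoly, mul_sub, mul_sum, mul_sum]
  congr 1 <;> refine sum_congr rfl fun i hi => ?_ <;> rw [mem_Icc] at hi
  · rw [mul_left_comm, pow_mul_pow_sub t (by omega)]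
  · rw [mul_left_comm, inv_pow, ← pow_mul_pow_sub t hi.2, mul_inv_cancel_right₀ (pow_ne_zero _ ht)]

theorem continuousOn_reducedPoly : ContinuousOn (reducedPoly a m n) (Set.Ioi 0) := by
  have hinv : ContinuousOn (fun t : ℝ => t⁻¹) (Set.Ioi 0) :=
    continuousOn_inv₀.mono fun _ ht => ne_of_gt ht
  exact (continuous_finsetSum _ fun i _ => by fun_prop).continuousOn.sub
    (continuousOn_finsetSum _ fun i _ => continuousOn_const.mul (hinv.pow _))

theorem strictMonoOn_reducedPoly (hmn : m < n) (han : 0 < a n) (ha : ∀ i ≤ n, 0 ≤ a i) :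
    StrictMonoOn (reducedPoly a m n) (Set.Ioi 0) := by
  intro x hx y hy hxy
  have hU := strictMonoOn_sum_mul_pow (Icc (m + 1) n) (fun i => i - m)
    (fun i hi => ha i (mem_Icc.mp hi).2) (right_mem_Icc.mpr hmn) han (by omega)
    (Set.mem_Ici_of_Ioi hx) (Set.mem_Ici_of_Ioi hy) hxy
  have hL := monotoneOn_sum_mul_pow (Icc 0 m) (fun i => m - i)
    (fun i hi => ha i (by rw [mem_Icc] at hi; omega)) (Set.mem_Ici.mpr (inv_nonneg.mpr hy.le))
    (Set.mem_Ici.mpr (inv_nonneg.mpr hx.le)) (inv_anti₀ hx hxy.le)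
  simp only [reducedPoly] at hU hL ⊢
  linarith

theorem exists_reducedPoly_neg (ham : 0 < a m) (ha : ∀ i ≤ m, 0 ≤ a i) :
    ∃ t, 0 < t ∧ reducedPoly a m n t < 0 := by
  have hU : Tendsto (fun t : ℝ => ∑ i ∈ Icc (m + 1) n, a i * t ^ (i - m)) (𝓝[>] 0) (𝓝 0) := by
    have hU0 : ∑ i ∈ Icc (m + 1) n, a i * (0 : ℝ) ^ (i - m) = 0 :=
      sum_eq_zero fun i hi => by rw [mem_Icc] at hi; rw [zero_pow (by omega), mul_zero]
    have hcont : Continuous fun t : ℝ => ∑ i ∈ Icc (m + 1) n, a i * t ^ (i - m) := by fun_prop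
    simpa only [hU0] using (hcont.tendsto 0).mono_left (nhdsWithin_le_nhds (s := Set.Ioi 0))
  obtain ⟨t, hUt, ht⟩ := ((hU.eventually (gt_mem_nhds ham)).and self_mem_nhdsWithin).exists
  have hL : a m ≤ ∑ i ∈ Icc 0 m, a i * t⁻¹ ^ (m - i) := by
    simpa using single_le_sum (f := fun i => a i * t⁻¹ ^ (m - i))
      (fun i hi => mul_nonneg (ha i (mem_Icc.mp hi).2) (by positivity))
      (right_mem_Icc.mpr m.zero_le)
  exact ⟨t, ht, by rw [reducedPoly]; linarith⟩

theorem exists_reducedPoly_pos (hmn : m < n) (han : 0 < a n) (ha : ∀ i ≤ n, 0 ≤ a i) :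
    ∃ t, 0 < t ∧ 0 < reducedPoly a m n t := by
  have hU : Tendsto (fun t : ℝ => ∑ i ∈ Icc (m + 1) n, a i * t ^ (i - m)) atTop atTop := by
    refine tendsto_atTop_mono' _ ?_ ((tendsto_pow_atTop (by omega : n - m ≠ 0)).const_mul_atTop han)
    filter_upwards [eventually_ge_atTop 0] with t ht
    exact single_le_sum (f := fun i => a i * t ^ (i - m))
      (fun i hi => mul_nonneg (ha i (mem_Icc.mp hi).2) (by positivity)) (right_mem_Icc.mpr hmn)
  obtain ⟨t, hUt, ht⟩ :=
    ((hU.eventually_gt_atTop (∑ i ∈ Icc 0 m, a i * 1 ^ (m - i))).and (eventually_ge_atTop 1)).exists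
  have hL := monotoneOn_sum_mul_pow (Icc 0 m) (fun i => m - i)
    (fun i hi => ha i (by rw [mem_Icc] at hi; omega))
    (Set.mem_Ici.mpr (inv_nonneg.mpr (zero_le_one.trans ht))) (Set.mem_Ici.mpr zero_le_one)
    (inv_le_one_of_one_le₀ ht)
  exact ⟨t, zero_lt_one.trans_le ht, by simp only [reducedPoly] at hL ⊢; linarith⟩

end Reduced

theorem poly_sign_change (n m : ℕ) (hmn : m < n) (a : ℕ → ℝ)
    (han : 0 < a n) (ham : 0 < a m)
    (ha : ∀ i, i < n → i ≠ m → 0 ≤ a i)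
    (P : ℝ → ℝ)
    (hP : ∀ t, P t = ∑ i ∈ Finset.Icc (m + 1) n, a i * t ^ i
                   - ∑ i ∈ Finset.Icc 0 m, a i * t ^ i) :
    ∃ t' : ℝ, 0 < t' ∧ P t' = 0 ∧
      (∀ s : ℝ, 0 < s → P s = 0 → s = t') ∧
      (∀ t : ℝ, 0 < t → t < t' → P t < 0) ∧
      (∀ t : ℝ, t' < t → 0 < P t) := by
  have ha' : ∀ i ≤ n, 0 ≤ a i := fun i hi =>
    if hin : i = n then hin ▸ han.le
    else if him : i = m then him ▸ ham.le
    else ha i (lt_of_le_of_ne hi hin) him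
  obtain ⟨x, hx, hgx⟩ := exists_reducedPoly_neg a m n ham fun i hi => ha' i (by omega)
  obtain ⟨y, hy, hgy⟩ := exists_reducedPoly_pos a m n hmn han ha'
  exact exists_pos_root_of_strictMonoOn (w := (· ^ m)) (fun t ht => pow_pos ht m)
    (fun t ht => by rw [hP, pow_mul_reducedPoly a m n ht.ne'])
    (continuousOn_reducedPoly a m n) (strictMonoOn_reducedPoly a m n hmn han ha') hx hgx hy hgy
end

section
/- Let n ∈ ℕ and m ∈ ℕ ∪ {0} with n > m, and let Pₙ(t) = Σ_{i=m+1}^{n} aᵢ tⁱ − Σ_{i=0}^{m} aᵢ tⁱ, where aₙ > 0, aₘ > 0, and aᵢ ≥ 0 for all 0 ≤ i ≤ n−1 with i ≠ m. Then for any given t₀ > 0: if Pₙ(t₀) > 0 then Pₙ(t) > 0 for all t ∈ (t₀, ∞), and if Pₙ(t₀) < 0 then Pₙ(t) < 0 for all t ∈ (0, t₀). -/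
theorem poly_sign_criterion (n m : ℕ) (hmn : m < n) (a : ℕ → ℝ)
    (han : 0 < a n) (ham : 0 < a m)
    (ha : ∀ i, i < n → i ≠ m → 0 ≤ a i)
    (P : ℝ → ℝ)
    (hP : ∀ t, P t = ∑ i ∈ Finset.Icc (m + 1) n, a i * t ^ i
                   - ∑ i ∈ Finset.Icc 0 m, a i * t ^ i)
    (t₀ : ℝ) (ht₀ : 0 < t₀) :
    (0 < P t₀ → ∀ t : ℝ, t₀ < t → 0 < P t) ∧
    (P t₀ < 0 → ∀ t : ℝ, 0 < t → t < t₀ → P t < 0) := by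
  have key : ∀ s t : ℝ, 0 < s → s < t →
      P s * t ^ (m+1) < P t * s ^ (m+1) := by
    intro s t hs hst
    have ht : 0 < t := hs.trans hst
    rw [hP s, hP t, sub_mul, sub_mul, Finset.sum_mul, Finset.sum_mul,
        Finset.sum_mul, Finset.sum_mul]
    have h1 : ∑ i ∈ Finset.Icc (m+1) n, a i * s ^ i * t ^ (m+1)
        ≤ ∑ i ∈ Finset.Icc (m+1) n, a i * t ^ i * s ^ (m+1) := by
      apply Finset.sum_le_sum
      intro i hi
      simp only [Finset.mem_Icc] at hi
      have hai : 0 ≤ a i := by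
        rcases lt_or_eq_of_le hi.2 with h | h
        · exact ha i h (by omega)
        · subst h; exact han.le
      obtain ⟨k, hk⟩ : ∃ k, i = (m+1) + k := ⟨i - (m+1), by omega⟩
      subst hk
      have hkey : s ^ ((m+1)+k) * t ^ (m+1) ≤ t ^ ((m+1)+k) * s ^ (m+1) := by
        rw [pow_add s (m+1) k, pow_add t (m+1) k]
        have h2 : s ^ k ≤ t ^ k := pow_le_pow_left₀ hs.le hst.le k
        nlinarith [mul_pos (pow_pos hs (m+1)) (pow_pos ht (m+1)), h2]
      nlinarith
    have h2 : ∑ i ∈ Finset.Icc 0 m, a i * t ^ i * s ^ (m+1)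
        < ∑ i ∈ Finset.Icc 0 m, a i * s ^ i * t ^ (m+1) := by
      apply Finset.sum_lt_sum
      · intro i hi
        simp only [Finset.mem_Icc] at hi
        have hai : 0 ≤ a i := by
          rcases eq_or_ne i m with h | h
          · subst h; exact ham.le
          · exact ha i (by omega) h
        obtain ⟨k, hk⟩ : ∃ k, m + 1 = i + k := ⟨m+1-i, by omega⟩
        have hkey : t ^ i * s ^ (m+1) ≤ s ^ i * t ^ (m+1) := by
          rw [hk, pow_add s i k, pow_add t i k]
          have h2 : s ^ k ≤ t ^ k := pow_le_pow_left₀ hs.le hst.le k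
          nlinarith [mul_pos (pow_pos hs i) (pow_pos ht i), h2]
        nlinarith
      · refine ⟨m, Finset.mem_Icc.mpr ⟨Nat.zero_le m, le_refl m⟩, ?_⟩
        have h3 : t ^ m * s ^ (m+1) < s ^ m * t ^ (m+1) := by
          rw [pow_succ, pow_succ, ← mul_assoc, ← mul_assoc]
          nlinarith [pow_pos hs m, pow_pos ht m, mul_pos (pow_pos hs m) (pow_pos ht m)]
        nlinarith
    linarith
  constructor
  · intro h0 t ht
    have hk := key t₀ t ht₀ ht
    have hp1 : 0 < t ^ (m+1) := pow_pos (ht₀.trans ht) _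
    have hp2 : 0 < t₀ ^ (m+1) := pow_pos ht₀ _
    nlinarith
  · intro h0 t ht htt
    have hk := key t t₀ ht htt
    have hp1 : 0 < t ^ (m+1) := pow_pos ht _
    have hp2 : 0 < t₀ ^ (m+1) := pow_pos ht₀ _
    nlinarith
end
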